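/- arXiv:2602.18839 — 5 statements merged into one kernel-verified Lean document; each statement's English description precedes it below -/
import Mathlib

section
/- Let n be a positive integer and G a profinite torsion group in which x^n belongs to FC(G) for every x ∈ G. Then G has finite exponent. -/
section FCProof
set_option linter.unusedSectionVars false
open Pointwise

variable {G : Type*} [Group G] [TopologicalSpace G] [IsTopologicalGroup G]
    [CompactSpace G] [T2Space G] [TotallyDisconnectedSpace G]

private lemma fc_isClosed_centralizer (z : G) :
    IsClosed ((Subgroup.centralizer {z} : Subgroup G) : Set G) := by
  have h : ((Subgroup.centralizer {z} : Subgroup G) : Set G) = {x : G | z * x = x * z} := by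
    ext x
    simp [Subgroup.mem_centralizer_iff]
  rw [h]
  exact isClosed_eq (continuous_const.mul continuous_id) (continuous_id.mul continuous_const)

private lemma fc_finiteIndex_of_isOpen (H : Subgroup G) (h : IsOpen (H : Set G)) :
    H.FiniteIndex :=
  have : Finite (G ⧸ H) := Subgroup.quotient_finite_of_isOpen H h
  Subgroup.finiteIndex_of_finite_quotient (H := H)

/-- An open normal subgroup avoiding a finite set not containing `1`. -/
private lemma fc_exists_openNormal_avoiding (S : Set G) (hS : S.Finite) (h1 : (1 : G) ∉ S) :
    ∃ U : Subgroup G, U.Normal ∧ IsOpen (U : Set G) ∧ ∀ g ∈ U, g ∉ S := by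
  have hopen : IsOpen Sᶜ := hS.isClosed.isOpen_compl
  obtain ⟨V, hV, h1V, hVS⟩ := compact_exists_isClopen_in_isOpen hopen h1
  obtain ⟨H, hH⟩ := IsTopologicalGroup.exist_openNormalSubgroup_sub_clopen_nhds_of_one hV h1V
  exact ⟨H.toSubgroup, H.isNormal', H.toOpenSubgroup.isOpen,
    fun g hg hmem => (hVS (hH hg)) hmem⟩

/-- Bundle of all the hypotheses of the theorem (plus unboundedness of orders). -/
private structure FCCtx (G : Type*) [Group G] : Type _ where
  n : ℕ
  hn : 0 < n
  htor : ∀ x : G, IsOfFinOrder x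
  hFC : ∀ x : G, (Subgroup.centralizer {x ^ n}).FiniteIndex
  hU : ∀ B : ℕ, ∃ x : G, B < orderOf x

/-- In any open normal subgroup there is an element of large order whose
centralizer has finite index. -/
private lemma fc_key (c : FCCtx G) (N : Subgroup G) (hNn : N.Normal)
    (hNo : IsOpen (N : Set G)) (Q : ℕ) :
    ∃ z : G, z ∈ N ∧ (Subgroup.centralizer {z}).FiniteIndex ∧ Q ≤ orderOf z := by
  haveI := hNn
  have hfi : N.FiniteIndex := fc_finiteIndex_of_isOpen N hNo
  have hr : N.index ≠ 0 := hfi.index_ne_zero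
  have hrpos : 0 < N.index := Nat.pos_of_ne_zero hr
  obtain ⟨x, hx⟩ := c.hU (Q * (N.index * c.n))
  refine ⟨(x ^ N.index) ^ c.n, Subgroup.pow_mem N (Subgroup.pow_index_mem N x) c.n,
    c.hFC _, ?_⟩
  -- order bound
  have e1 : orderOf (x ^ N.index) = orderOf x / Nat.gcd (orderOf x) N.index :=
    orderOf_pow' x hr
  have e2 : orderOf ((x ^ N.index) ^ c.n)
      = orderOf (x ^ N.index) / Nat.gcd (orderOf (x ^ N.index)) c.n :=
    orderOf_pow' _ c.hn.ne'
  have b1 : orderOf x / N.index ≤ orderOf (x ^ N.index) := by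
    rw [e1]
    exact Nat.div_le_div_left (Nat.gcd_le_right _ hrpos)
      (Nat.gcd_pos_of_pos_right _ hrpos)
  have b2 : orderOf (x ^ N.index) / c.n ≤ orderOf ((x ^ N.index) ^ c.n) := by
    rw [e2]
    exact Nat.div_le_div_left (Nat.gcd_le_right _ c.hn)
      (Nat.gcd_pos_of_pos_right _ c.hn)
  have hQ : Q ≤ orderOf x / (N.index * c.n) := by
    rw [Nat.le_div_iff_mul_le (Nat.mul_pos hrpos c.hn)]
    exact hx.le
  calc Q ≤ orderOf x / (N.index * c.n) := hQ
    _ = orderOf x / N.index / c.n := (Nat.div_div_eq_div_mul _ _ _).symm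
    _ ≤ orderOf (x ^ N.index) / c.n := Nat.div_le_div_right b1
    _ ≤ orderOf ((x ^ N.index) ^ c.n) := b2

/-- Shrink an open normal subgroup into the centralizer of `z`, avoiding `⟨z⟩ \ {1}`. -/
private lemma fc_shrink (N : Subgroup G) (hNn : N.Normal) (hNo : IsOpen (N : Set G)) (z : G)
    (hzf : (Subgroup.centralizer {z}).FiniteIndex) (hz : IsOfFinOrder z) :
    ∃ M : Subgroup G, M.Normal ∧ IsOpen (M : Set G) ∧ M ≤ N ∧
      (∀ g ∈ M, Commute z g) ∧ (∀ g ∈ M, g ∈ Subgroup.zpowers z → g = 1) := by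
  classical
  set C := Subgroup.centralizer ({z} : Set G) with hC
  have hCc : IsClosed (C : Set G) := fc_isClosed_centralizer z
  haveI : C.FiniteIndex := hzf
  have hKc : IsClosed (C.normalCore : Set G) := Subgroup.normalCore_isClosed C hCc
  haveI : C.normalCore.FiniteIndex := Subgroup.finiteIndex_normalCore C
  have hKo : IsOpen (C.normalCore : Set G) :=
    Subgroup.isOpen_of_isClosed_of_finiteIndex _ hKc
  -- the finite set to avoid
  set S : Set G := ((Subgroup.zpowers z : Subgroup G) : Set G) \ {1} with hSdef
  have hSfin : S.Finite := Set.Finite.diff hz.finite_zpowers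
  have h1S : (1 : G) ∉ S := by simp [hSdef]
  obtain ⟨U, hUn, hUo, hUa⟩ := fc_exists_openNormal_avoiding S hSfin h1S
  refine ⟨N ⊓ (C.normalCore ⊓ U), ?_, ?_, inf_le_left, ?_, ?_⟩
  · constructor
    intro x hx g
    have hx' := Subgroup.mem_inf.mp hx
    have hx'' := Subgroup.mem_inf.mp hx'.2
    refine Subgroup.mem_inf.mpr ⟨hNn.conj_mem _ hx'.1 g, Subgroup.mem_inf.mpr
      ⟨(Subgroup.normalCore_normal C).conj_mem _ hx''.1 g, hUn.conj_mem _ hx''.2 g⟩⟩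
  · have : ((N ⊓ (C.normalCore ⊓ U) : Subgroup G) : Set G)
        = (N : Set G) ∩ ((C.normalCore : Set G) ∩ (U : Set G)) := by
      simp [Subgroup.coe_inf]
    rw [this]
    exact hNo.inter (hKo.inter hUo)
  · intro g hg
    rw [Subgroup.mem_inf, Subgroup.mem_inf] at hg
    have hgC : g ∈ C := Subgroup.normalCore_le C hg.2.1
    have := (Subgroup.mem_centralizer_iff).mp hgC z (Set.mem_singleton z)
    exact this
  · intro g hg hgz
    rw [Subgroup.mem_inf, Subgroup.mem_inf] at hg
    by_contra hne
    exact hUa g hg.2.2 ⟨hgz, hne⟩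

/-- State carried through the recursion. -/
private structure FCSt (G : Type*) [Group G] [TopologicalSpace G] : Type _ where
  N : Subgroup G
  P : ℕ
  nrm : N.Normal
  opn : IsOpen (N : Set G)
  hP : 0 < P

/-- The chosen element at stage `j` from state `s`. -/
private noncomputable def fcz (c : FCCtx G) (j : ℕ) (s : FCSt G) : G :=
  (fc_key c s.N s.nrm s.opn ((j + 1) * s.P)).choose

private lemma fcz_spec (c : FCCtx G) (j : ℕ) (s : FCSt G) :
    fcz c j s ∈ s.N ∧ (Subgroup.centralizer {fcz c j s}).FiniteIndex ∧
      (j + 1) * s.P ≤ orderOf (fcz c j s) :=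
  (fc_key c s.N s.nrm s.opn ((j + 1) * s.P)).choose_spec

/-- The next state. -/
private noncomputable def fcstep (c : FCCtx G) (j : ℕ) (s : FCSt G) : FCSt G :=
  let z := fcz c j s
  let h := fc_shrink s.N s.nrm s.opn z (fcz_spec c j s).2.1 (c.htor z)
  ⟨h.choose, s.P * orderOf z, h.choose_spec.1, h.choose_spec.2.1,
    Nat.mul_pos s.hP (c.htor z).orderOf_pos⟩

private lemma fcstep_spec (c : FCCtx G) (j : ℕ) (s : FCSt G) :
    (fcstep c j s).N ≤ s.N ∧
      (∀ g ∈ (fcstep c j s).N, Commute (fcz c j s) g) ∧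
      (∀ g ∈ (fcstep c j s).N, g ∈ Subgroup.zpowers (fcz c j s) → g = 1) ∧
      (fcstep c j s).P = s.P * orderOf (fcz c j s) := by
  have h := (fc_shrink s.N s.nrm s.opn (fcz c j s) (fcz_spec c j s).2.1
    (c.htor (fcz c j s))).choose_spec
  exact ⟨h.2.2.1, h.2.2.2.1, h.2.2.2.2, rfl⟩

/-- The recursive sequence of states. -/
private noncomputable def fcseq (c : FCCtx G) : ℕ → FCSt G
  | 0 => ⟨⊤, 1, ⟨fun _ _ _ => Subgroup.mem_top _⟩, by rw [Subgroup.coe_top]; exact isOpen_univ, one_pos⟩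
  | j + 1 => fcstep c j (fcseq c j)

/-- The chosen elements. -/
private noncomputable def fcZ (c : FCCtx G) (j : ℕ) : G := fcz c j (fcseq c j)

private lemma fcseq_succ (c : FCCtx G) (j : ℕ) :
    fcseq c (j + 1) = fcstep c j (fcseq c j) := rfl

private lemma fcseq_mono (c : FCCtx G) : ∀ {i j : ℕ}, i ≤ j →
    (fcseq c j).N ≤ (fcseq c i).N := by
  intro i j h
  induction j with
  | zero =>
    have : i = 0 := Nat.le_zero.mp h
    subst this; exact le_refl _
  | succ j ih =>
    rcases eq_or_lt_of_le h with h' | h'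
    · subst h'; exact le_refl _
    · exact le_trans ((fcstep_spec c j (fcseq c j)).1) (ih (Nat.lt_succ_iff.mp h'))

private lemma fc_commute (c : FCCtx G) {i j : ℕ} (hij : i < j) :
    ∀ g ∈ (fcseq c j).N, Commute (fcZ c i) g := by
  intro g hg
  have h1 : (fcseq c j).N ≤ (fcseq c (i + 1)).N := fcseq_mono c hij
  have h2 := (fcstep_spec c i (fcseq c i)).2.1
  exact h2 g (h1 hg)

private lemma fc_dvd (c : FCCtx G) : ∀ {i j : ℕ}, i < j →
    orderOf (fcZ c i) ∣ (fcseq c j).P := by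
  intro i j h
  induction j with
  | zero => exact absurd h (Nat.not_lt_zero i)
  | succ j ih =>
    have hP : (fcseq c (j + 1)).P = (fcseq c j).P * orderOf (fcZ c j) :=
      (fcstep_spec c j (fcseq c j)).2.2.2
    rcases Nat.lt_succ_iff_lt_or_eq.mp h with h' | h'
    · rw [hP]; exact Dvd.dvd.mul_right (ih h') _
    · subst h'; rw [hP]; exact Dvd.dvd.mul_left dvd_rfl _

private lemma fcZ_mem (c : FCCtx G) (j : ℕ) : fcZ c j ∈ (fcseq c j).N :=
  (fcz_spec c j (fcseq c j)).1

private lemma fcZ_order (c : FCCtx G) (j : ℕ) :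
    (j + 1) * (fcseq c j).P ≤ orderOf (fcZ c j) :=
  (fcz_spec c j (fcseq c j)).2.2

/-- Partial products of the chosen elements. -/
private noncomputable def fcpp (c : FCCtx G) : ℕ → G
  | 0 => 1
  | j + 1 => fcpp c j * fcZ c j

private lemma fcpp_commute (c : FCCtx G) (g : G) :
    ∀ k : ℕ, (∀ i < k, Commute (fcZ c i) g) → Commute (fcpp c k) g := by
  intro k
  induction k with
  | zero => intro _; exact Commute.one_left g
  | succ k ih =>
    intro h
    have h1 : Commute (fcpp c k) g := ih (fun i hi => h i (Nat.lt_succ_of_lt hi))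
    have h2 : Commute (fcZ c k) g := h k (Nat.lt_succ_self k)
    exact h1.mul_left h2

private lemma fcpp_pow_eq_one (c : FCCtx G) (j T : ℕ)
    (hT : ∀ i < j, orderOf (fcZ c i) ∣ T) :
    ∀ k, k ≤ j → (fcpp c k) ^ T = 1 := by
  intro k
  induction k with
  | zero => intro _; exact one_pow T
  | succ k ih =>
    intro hk
    have hkj : k < j := Nat.lt_of_succ_le hk
    have hcomm : Commute (fcpp c k) (fcZ c k) := by
      apply fcpp_commute
      intro i hi
      exact fc_commute c hi _ (fcZ_mem c k)
    have : (fcpp c (k + 1)) ^ T = (fcpp c k) ^ T * (fcZ c k) ^ T := by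
      show (fcpp c k * fcZ c k) ^ T = _
      exact hcomm.mul_pow T
    rw [this, ih (le_of_lt hkj), one_mul]
    exact orderOf_dvd_iff_pow_eq_one.mp (hT k hkj)

/-- The main contradiction: if orders were unbounded, build an element of infinite order. -/
private lemma fc_main (c : FCCtx G) : False := by
  classical
  -- the nested closed cosets
  set Sset : ℕ → Set G := fun j => (fcpp c j) • ((fcseq c j).N : Set G) with hSset
  have hclosed : ∀ j, IsClosed (Sset j) := by
    intro j
    exact IsClosed.smul (Subgroup.isClosed_of_isOpen _ (fcseq c j).opn) _
  have hne : ∀ j, (Sset j).Nonempty := by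
    intro j
    exact ⟨fcpp c j • (1 : G), Set.smul_mem_smul_set (Subgroup.one_mem _)⟩
  have hnested : ∀ j, Sset (j + 1) ⊆ Sset j := by
    intro j y hy
    obtain ⟨w, hw, rfl⟩ := hy
    have hw' : fcZ c j * w ∈ (fcseq c j).N := by
      exact Subgroup.mul_mem _ (fcZ_mem c j) ((fcstep_spec c j (fcseq c j)).1 hw)
    have : (fcpp c (j + 1)) • w = (fcpp c j) • (fcZ c j * w) := by
      show fcpp c (j + 1) * w = fcpp c j * (fcZ c j * w)
      show fcpp c j * fcZ c j * w = _
      rw [mul_assoc]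
    show fcpp c (j + 1) • w ∈ Sset j
    rw [this]
    exact Set.smul_mem_smul_set hw'
  obtain ⟨y, hy⟩ := IsCompact.nonempty_iInter_of_sequence_nonempty_isCompact_isClosed
    Sset hnested hne ((hclosed 0).isCompact) hclosed
  -- y has finite order m, derive m ≥ j+1 at stage j := m
  set m := orderOf y with hm
  have hmpos : 0 < m := (c.htor y).orderOf_pos
  have hyj : y ∈ Sset (m + 1) := Set.mem_iInter.mp hy (m + 1)
  obtain ⟨ν, hν, hyeq⟩ := hyj
  -- hyeq : fcpp c (m+1) • ν = y
  have hPpos : 0 < (fcseq c m).P := (fcseq c m).hP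
  have hTdvd : ∀ i < m, orderOf (fcZ c i) ∣ m * (fcseq c m).P := fun i hi =>
    Dvd.dvd.mul_left (fc_dvd c hi) m
  have hppT : (fcpp c m) ^ (m * (fcseq c m).P) = 1 :=
    fcpp_pow_eq_one c m _ hTdvd m (le_refl m)
  have hνcomm : ∀ i < m + 1, Commute (fcZ c i) ν := fun i hi =>
    fc_commute c hi ν hν
  have hcomm1 : Commute (fcpp c (m + 1)) ν := fcpp_commute c ν (m + 1) hνcomm
  have hcomm2 : Commute (fcpp c m) (fcZ c m) := by
    apply fcpp_commute
    intro i hi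
    exact fc_commute c hi _ (fcZ_mem c m)
  have hym : y ^ m = 1 := by rw [hm]; exact pow_orderOf_eq_one y
  have hyT : y ^ (m * (fcseq c m).P) = 1 := by
    rw [pow_mul, hym, one_pow]
  have hkey : (fcZ c m) ^ (m * (fcseq c m).P) * ν ^ (m * (fcseq c m).P) = 1 := by
    have h1 : y ^ (m * (fcseq c m).P)
        = (fcpp c (m + 1)) ^ (m * (fcseq c m).P) * ν ^ (m * (fcseq c m).P) := by
      rw [← hyeq]
      show (fcpp c (m + 1) * ν) ^ (m * (fcseq c m).P) = _
      exact hcomm1.mul_pow _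
    have h2 : (fcpp c (m + 1)) ^ (m * (fcseq c m).P)
        = (fcpp c m) ^ (m * (fcseq c m).P) * (fcZ c m) ^ (m * (fcseq c m).P) := by
      show (fcpp c m * fcZ c m) ^ (m * (fcseq c m).P) = _
      exact hcomm2.mul_pow _
    rw [h2, hppT, one_mul] at h1
    rw [← h1, hyT]
  -- hence (fcZ c m) ^ T lies in the avoided subgroup
  have hmem : (fcZ c m) ^ (m * (fcseq c m).P) ∈ (fcseq c (m + 1)).N := by
    have h3 : (fcZ c m) ^ (m * (fcseq c m).P) = (ν ^ (m * (fcseq c m).P))⁻¹ := by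
      rw [eq_inv_iff_mul_eq_one]; exact hkey
    rw [h3]
    exact Subgroup.inv_mem _ (Subgroup.pow_mem _ hν _)
  have hzp : (fcZ c m) ^ (m * (fcseq c m).P) ∈ Subgroup.zpowers (fcZ c m) :=
    Subgroup.pow_mem _ (Subgroup.mem_zpowers _) _
  have hone : (fcZ c m) ^ (m * (fcseq c m).P) = 1 :=
    (fcstep_spec c m (fcseq c m)).2.2.1 _ hmem hzp
  have hdvd : orderOf (fcZ c m) ∣ m * (fcseq c m).P := orderOf_dvd_iff_pow_eq_one.mpr hone
  have hle : (m + 1) * (fcseq c m).P ≤ m * (fcseq c m).P := by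
    calc (m + 1) * (fcseq c m).P ≤ orderOf (fcZ c m) := fcZ_order c m
      _ ≤ m * (fcseq c m).P := Nat.le_of_dvd (Nat.mul_pos hmpos hPpos) hdvd
  have hcon : m + 1 ≤ m := Nat.le_of_mul_le_mul_right hle hPpos
  exact absurd hcon (by omega)

end FCProof

/-- A profinite torsion group in which `x ^ n ∈ FC(G)` for every `x` has finite exponent. -/
theorem stmt_3 {G : Type*} [Group G] [TopologicalSpace G] [IsTopologicalGroup G]
    [CompactSpace G] [T2Space G] [TotallyDisconnectedSpace G]
    (n : ℕ) (hn : 0 < n)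
    (htor : ∀ x : G, IsOfFinOrder x)
    (hFC : ∀ x : G, (Subgroup.centralizer {x ^ n}).FiniteIndex) :
    ∃ e : ℕ, 0 < e ∧ ∀ x : G, x ^ e = 1 := by
  by_contra h
  push_neg at h
  have hU : ∀ B : ℕ, ∃ x : G, B < orderOf x := by
    intro B
    obtain ⟨x, hx⟩ := h (Nat.factorial B) (Nat.factorial_pos B)
    refine ⟨x, ?_⟩
    by_contra hle
    push_neg at hle
    exact hx (orderOf_dvd_iff_pow_eq_one.mp
      (Nat.dvd_factorial (htor x).orderOf_pos hle))
  exact fc_main ⟨n, hn, htor, hFC, hU⟩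
end

section
/- Let G be a profinite torsion group and K a closed subgroup of G. Then there exist a positive integer i, an element g ∈ K, and an open normal subgroup N of G such that (gx)^i = 1 for every x ∈ K ∩ N. -/
/-- In a profinite torsion group `G`, for any closed subgroup `K` there are `i ≥ 1`,
`g ∈ K` and an open normal subgroup `N` of `G` with `(g * x) ^ i = 1` for all `x ∈ K ⊓ N`. -/
theorem stmt_4 {G : Type*} [Group G] [TopologicalSpace G] [IsTopologicalGroup G]
    [CompactSpace G] [T2Space G] [TotallyDisconnectedSpace G]
    (htor : ∀ x : G, IsOfFinOrder x)
    (K : Subgroup G) (hK : IsClosed (K : Set G)) :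
    ∃ i : ℕ, 0 < i ∧ ∃ g ∈ K, ∃ N : Subgroup G, N.Normal ∧ IsOpen (N : Set G) ∧
      ∀ x ∈ K ⊓ N, (g * x) ^ i = 1 := by
  have : CompactSpace K := isCompact_iff_compactSpace.mp (hK.isCompact)
  -- Baire category on K
  set S : ℕ → Set K := fun n => {x : K | (x : G) ^ (n + 1) = 1} with hS
  have hclosed : ∀ n, IsClosed (S n) := fun n =>
    isClosed_singleton.preimage ((continuous_pow (n + 1)).comp continuous_subtype_val)
  have hcover : (⋃ n, S n) = Set.univ := by
    ext x
    simp only [Set.mem_iUnion, Set.mem_univ, iff_true]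
    obtain ⟨m, hm, hx⟩ := (isOfFinOrder_iff_pow_eq_one).mp (htor (x : G))
    exact ⟨m - 1, show (x : G) ^ (m - 1 + 1) = 1 by rwa [Nat.sub_add_cancel hm]⟩
  obtain ⟨n, ⟨g, hg⟩⟩ := nonempty_interior_of_iUnion_of_closed hclosed hcover
  obtain ⟨V, hVopen, hV⟩ := isOpen_induced_iff.mp (isOpen_interior (s := S n))
  have hgV : (g : G) ∈ V := by rw [← hV] at hg; exact hg
  -- open neighborhood of 1
  have hUopen : IsOpen {x : G | (g : G) * x ∈ V} :=
    hVopen.preimage (continuous_mul_left (g : G))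
  have h1U : (1 : G) ∈ {x : G | (g : G) * x ∈ V} := by simpa using hgV
  obtain ⟨C, hC, h1C, hCU⟩ := compact_exists_isClopen_in_isOpen hUopen h1U
  obtain ⟨N, hN⟩ := IsTopologicalGroup.exist_openNormalSubgroup_sub_clopen_nhds_of_one hC h1C
  refine ⟨n + 1, Nat.succ_pos n, g, g.2, N.toSubgroup, N.isNormal', N.isOpen', ?_⟩
  rintro x hx
  have hxN : x ∈ (N : Set G) := hx.2
  have hgxV : (g : G) * x ∈ V := hCU (hN hxN)
  have hgxK : (g : G) * x ∈ K := K.mul_mem g.2 hx.1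
  have : (⟨(g : G) * x, hgxK⟩ : K) ∈ interior (S n) := by
    rw [← hV]; exact hgxV
  have h2 : (⟨(g : G) * x, hgxK⟩ : K) ∈ S n := interior_subset this
  exact h2
end

section
/- Let K be a profinite group and g ∈ K an element such that the centralizer C_K(g) has finite index in K, and suppose there is a closed normal subgroup N_0 of finite index in K such that (gx)^i = 1 for all x ∈ N_0, for a fixed positive integer i. Then K has finite exponent. -/
/-- Let `K` be a profinite group, `g ∈ K` an element whose centralizer has finite index,
and `N₀` a closed normal subgroup of finite index such that `(g * x) ^ i = 1` for all
`x ∈ N₀`, for a fixed `i ≥ 1`. Then `K` has finite exponent. -/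
theorem stmt_5 {K : Type*} [Group K] [TopologicalSpace K] [IsTopologicalGroup K]
    [CompactSpace K] [T2Space K] [TotallyDisconnectedSpace K]
    (g : K) (hg : (Subgroup.centralizer {g}).FiniteIndex)
    (N₀ : Subgroup K) (hclosed : IsClosed (N₀ : Set K)) [N₀.Normal] [N₀.FiniteIndex]
    (i : ℕ) (hi : 0 < i) (h : ∀ x ∈ N₀, (g * x) ^ i = 1) :
    ∃ e : ℕ, 0 < e ∧ ∀ x : K, x ^ e = 1 := by
  -- Every element of H := N₀ ⊓ C(g) has order dividing i.
  set H : Subgroup K := N₀ ⊓ Subgroup.centralizer {g} with hH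
  have hgi : g ^ i = 1 := by simpa using h 1 N₀.one_mem
  have hHpow : ∀ x ∈ H, x ^ i = 1 := by
    intro x hx
    obtain ⟨hx₁, hx₂⟩ := hx
    have hc : Commute g x := (Subgroup.mem_centralizer_singleton_iff.mp hx₂).symm
    have := h x hx₁
    rw [hc.mul_pow, hgi, one_mul] at this
    exact this
  have hHfi : H.FiniteIndex := by haveI := hg; infer_instance
  -- Pass to the normal core, still finite index.
  have hNfi : H.normalCore.FiniteIndex := Subgroup.finiteIndex_normalCore H
  refine ⟨H.normalCore.index * i, Nat.mul_pos (Nat.pos_of_ne_zero hNfi.index_ne_zero) hi, ?_⟩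
  intro x
  rw [pow_mul]
  exact hHpow _ (H.normalCore_le (Subgroup.pow_index_mem H.normalCore x))
end

section
/- Let G be an infinite nilpotent profinite group. Then the center Z(G) is infinite. -/
open Subgroup

private lemma ucs_isClosed {G : Type*} [Group G] [TopologicalSpace G] [IsTopologicalGroup G]
    [T1Space G] : ∀ n, IsClosed ((Subgroup.upperCentralSeries G n : Subgroup G) : Set G)
  | 0 => by
      have h : ((Subgroup.upperCentralSeries G 0 : Subgroup G) : Set G) = {1} := by
        rw [Subgroup.upperCentralSeries_zero]; rfl
      rw [h]; exact isClosed_singleton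
  | n + 1 => by
      have h : ((Subgroup.upperCentralSeries G (n + 1) : Subgroup G) : Set G)
          = ⋂ y : G, (fun x => x * y * x⁻¹ * y⁻¹) ⁻¹'
              ((Subgroup.upperCentralSeries G n : Subgroup G) : Set G) := by
        ext x
        simp only [Set.mem_iInter, Set.mem_preimage, SetLike.mem_coe,
          Subgroup.mem_upperCentralSeries_succ_iff, commutatorElement_def]
      rw [h]
      exact isClosed_iInter fun y => (ucs_isClosed n).preimage (by continuity)

/-- The center of an infinite nilpotent profinite group is infinite. -/
theorem stmt_8 {G : Type*} [Group G] [TopologicalSpace G] [IsTopologicalGroup G]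
    [CompactSpace G] [T2Space G] [TotallyDisconnectedSpace G]
    [Infinite G] (hnil : Group.IsNilpotent G) :
    (Subgroup.center G : Set G).Infinite := by
  classical
  by_contra hfin
  rw [Set.not_infinite] at hfin
  obtain ⟨c, hc⟩ := hnil.nilpotent
  -- minimal n with infinite upper central series term
  let p : ℕ → Prop := fun n => ((Subgroup.upperCentralSeries G n : Subgroup G) : Set G).Infinite
  have hpc : p c := by
    show ((Subgroup.upperCentralSeries G c : Subgroup G) : Set G).Infinite
    rw [hc]
    simpa using Set.infinite_univ (α := G)
  have hex : ∃ n, p n := ⟨c, hpc⟩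
  have hpn : p (Nat.find hex) := Nat.find_spec hex
  have hn0 : Nat.find hex ≠ 0 := by
    intro h0
    rw [h0] at hpn
    have h1 : ((Subgroup.upperCentralSeries G 0 : Subgroup G) : Set G).Infinite := hpn
    rw [Subgroup.upperCentralSeries_zero] at h1
    simp only [Subgroup.coe_bot] at h1
    exact h1 (Set.finite_singleton 1)
  obtain ⟨m, hm⟩ : ∃ m, Nat.find hex = m + 1 := Nat.exists_eq_succ_of_ne_zero hn0
  rw [hm] at hpn
  have hnotpm : ¬ p m := Nat.find_min hex (by omega)
  set Z : Subgroup G := Subgroup.upperCentralSeries G (m + 1) with hZdef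
  set F : Subgroup G := Subgroup.upperCentralSeries G m with hFdef
  have hZ : (Z : Set G).Infinite := hpn
  have hF : (F : Set G).Finite := by
    rwa [Set.not_infinite] at hnotpm
  have hcomm : ∀ x ∈ Z, ∀ g : G, x * g * x⁻¹ * g⁻¹ ∈ F := fun x hx g =>
    Subgroup.mem_upperCentralSeries_succ_iff.mp hx g
  -- tube lemma: a neighbourhood of 1 centralizing Z
  have hVopen : IsOpen (((F : Set G) \ {1})ᶜ) :=
    ((hF.subset Set.diff_subset).isClosed).isOpen_compl
  have hΦcont : Continuous (fun q : G × G => q.1 * q.2 * q.1⁻¹ * q.2⁻¹) := by continuity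
  have hNopen : IsOpen ((fun q : G × G => q.1 * q.2 * q.1⁻¹ * q.2⁻¹) ⁻¹' ((F : Set G) \ {1})ᶜ) :=
    hVopen.preimage hΦcont
  have hsub : (Z : Set G) ×ˢ ({1} : Set G) ⊆
      (fun q : G × G => q.1 * q.2 * q.1⁻¹ * q.2⁻¹) ⁻¹' ((F : Set G) \ {1})ᶜ := by
    rintro ⟨x, g⟩ ⟨hx, hg⟩
    simp only [Set.mem_singleton_iff] at hg
    subst hg
    simp [Set.mem_preimage]
  obtain ⟨u, v, hu, hv, hZu, h1v, huv⟩ := generalized_tube_lemma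
    ((ucs_isClosed (m + 1)).isCompact) isCompact_singleton hNopen hsub
  have hvcomm : ∀ g ∈ v, ∀ x ∈ Z, x * g = g * x := by
    intro g hg x hx
    have hmem : ((x, g) : G × G) ∈ u ×ˢ v := ⟨hZu hx, hg⟩
    have h1 := huv hmem
    simp only [Set.mem_preimage, Set.mem_compl_iff, Set.mem_diff, Set.mem_singleton_iff,
      not_and, not_not] at h1
    have h2 : x * g * x⁻¹ * g⁻¹ = 1 := h1 (hcomm x hx g)
    calc x * g = (x * g * x⁻¹ * g⁻¹) * (g * x) := by group
    _ = 1 * (g * x) := by rw [h2]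
    _ = g * x := one_mul _
  set K : Subgroup G := Subgroup.centralizer (Z : Set G) with hKdef
  have hvK : v ⊆ (K : Set G) := by
    intro g hg
    rw [SetLike.mem_coe, Subgroup.mem_centralizer_iff]
    intro x hx
    exact hvcomm g hg x hx
  have hKopen : IsOpen (K : Set G) :=
    Subgroup.isOpen_of_mem_nhds K (Filter.mem_of_superset (hv.mem_nhds (h1v rfl)) hvK)
  haveI : Finite (G ⧸ K) := K.quotient_finite_of_isOpen hKopen
  haveI : Finite ((F : Set G) : Type _) := hF.to_subtype
  haveI : Infinite ((Z : Set G) : Type _) := hZ.to_subtype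
  -- commutator with g depends only on the coset gK, for elements of Z
  have hstepA : ∀ x ∈ Z, ∀ g : G, ∀ k ∈ K,
      x * (g * k) * x⁻¹ * (g * k)⁻¹ = x * g * x⁻¹ * g⁻¹ := by
    intro x hx g k hk
    have hxk : x * k = k * x := Subgroup.mem_centralizer_iff.mp hk x hx
    have hinv : k * x⁻¹ * k⁻¹ = x⁻¹ := by
      have hcomm' : Commute x k := hxk
      have h2 : Commute x⁻¹ k := hcomm'.inv_left
      rw [← h2.eq]
      group
    calc x * (g * k) * x⁻¹ * (g * k)⁻¹ = x * g * (k * x⁻¹ * k⁻¹) * g⁻¹ := by group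
    _ = x * g * x⁻¹ * g⁻¹ := by rw [hinv]
  -- the pigeonhole map
  let Φ2 : ((Z : Set G) : Type _) → (G ⧸ K) → ((F : Set G) : Type _) := fun a q =>
    ⟨(a : G) * q.out * (a : G)⁻¹ * q.out⁻¹, hcomm (a : G) a.2 q.out⟩
  obtain ⟨y, hy⟩ := Finite.exists_infinite_fiber Φ2
  have hyS : (Φ2 ⁻¹' {y}).Infinite := Set.infinite_coe_iff.mp hy
  obtain ⟨b, hb⟩ := hyS.nonempty
  -- every member of the fiber differs from b by a central element
  have hcen : ∀ a : ((Z : Set G) : Type _), a ∈ Φ2 ⁻¹' {y} →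
      (b : G)⁻¹ * (a : G) ∈ Subgroup.center G := by
    intro a ha
    rw [Subgroup.mem_center_iff]
    intro g
    have hceq : ∀ g' : G, (a : G) * g' * (a : G)⁻¹ * g'⁻¹ = (b : G) * g' * (b : G)⁻¹ * g'⁻¹ → 
        g * ((b : G)⁻¹ * (a : G)) = ((b : G)⁻¹ * (a : G)) * g → True := fun _ _ _ => trivial
    -- commutators of a and b with g agree
    obtain ⟨k, hk⟩ := QuotientGroup.mk_out_eq_mul K g
    have houta : (a : G) * (QuotientGroup.mk g : G ⧸ K).out * (a : G)⁻¹ *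
        ((QuotientGroup.mk g : G ⧸ K).out)⁻¹ = (a : G) * g * (a : G)⁻¹ * g⁻¹ := by
      rw [hk]; exact hstepA (a : G) a.2 g k k.2
    have houtb : (b : G) * (QuotientGroup.mk g : G ⧸ K).out * (b : G)⁻¹ *
        ((QuotientGroup.mk g : G ⧸ K).out)⁻¹ = (b : G) * g * (b : G)⁻¹ * g⁻¹ := by
      rw [hk]; exact hstepA (b : G) b.2 g k k.2
    have hfib : Φ2 a (QuotientGroup.mk g) = Φ2 b (QuotientGroup.mk g) := by
      have ha' : Φ2 a = y := ha
      have hb' : Φ2 b = y := hb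
      rw [ha', hb']
    have heq : (a : G) * g * (a : G)⁻¹ * g⁻¹ = (b : G) * g * (b : G)⁻¹ * g⁻¹ := by
      have := congrArg (Subtype.val) hfib
      simp only [Φ2] at this
      rw [← houta, ← houtb]
      exact this
    -- deduce commutation
    have h3 : (a : G) * g * (a : G)⁻¹ = (b : G) * g * (b : G)⁻¹ := by
      have := mul_right_cancel (b := g⁻¹) heq
      exact this
    calc g * ((b : G)⁻¹ * (a : G)) = (b : G)⁻¹ * ((b : G) * g * (b : G)⁻¹) * (a : G) := by group
    _ = (b : G)⁻¹ * ((a : G) * g * (a : G)⁻¹) * (a : G) := by rw [h3]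
    _ = ((b : G)⁻¹ * (a : G)) * g := by group
  -- build an injection from the infinite fiber into the finite center
  haveI : Finite ((Subgroup.center G : Set G) : Type _) := hfin.to_subtype
  haveI : Infinite ((Φ2 ⁻¹' {y}) : Type _) := hy
  let f : ((Φ2 ⁻¹' {y}) : Type _) → ((Subgroup.center G : Set G) : Type _) := fun a =>
    ⟨(b : G)⁻¹ * ((a : ((Z : Set G) : Type _)) : G), hcen a a.2⟩
  have hinj : Function.Injective f := by
    intro a1 a2 h
    have : (b : G)⁻¹ * ((a1 : ((Z : Set G) : Type _)) : G)
        = (b : G)⁻¹ * ((a2 : ((Z : Set G) : Type _)) : G) := congrArg Subtype.val h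
    have h2 := mul_left_cancel this
    exact Subtype.ext (Subtype.ext h2)
  haveI := Finite.of_injective f hinj
  exact not_finite (((Φ2 ⁻¹' {y}) : Set _) : Type _)
end

section
/- Let G be a profinite group in which the centralizer of x^n is either finite or open for every x ∈ G (n a fixed positive integer). If G contains an element g of infinite order, then D = C_G(g^n) is an open subgroup of G with the property that y^n ∈ FC(D) for every y ∈ D. -/
/-- If the closure of the cyclic subgroup generated by `g` is infinite,
then `g` is not of finite order. -/
lemma aux_not_finOrder {G : Type*} [Group G] [TopologicalSpace G] [IsTopologicalGroup G]
    [T2Space G]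
    {g : G} (hg : ((Subgroup.zpowers g).topologicalClosure : Set G).Infinite) :
    ¬ IsOfFinOrder g := by
  intro hfin
  have hfinset : ((Subgroup.zpowers g : Set G)).Finite := by
    have : Finite (Subgroup.zpowers g) := hfin.finite_zpowers
    exact (Subgroup.zpowers g : Set G).toFinite
  have hclosed : IsClosed (Subgroup.zpowers g : Set G) := hfinset.isClosed
  have : ((Subgroup.zpowers g).topologicalClosure : Set G) = (Subgroup.zpowers g : Set G) := by
    simpa [Subgroup.topologicalClosure] using hclosed.closure_eq
  exact hg (this ▸ hfinset)

/-- If `g ^ n` (n > 0) lies in a finite subgroup then `g` has finite order. -/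
lemma aux_finOrder_of_mem_finite {G : Type*} [Group G] {g : G} {n : ℕ} (hn : 0 < n)
    {H : Subgroup G} (hH : (H : Set G).Finite) (hmem : g ^ n ∈ H) : IsOfFinOrder g := by
  have h1 : Subgroup.zpowers (g ^ n) ≤ H := by
    rw [Subgroup.zpowers_le]; exact hmem
  have hpow : (Submonoid.powers (g ^ n) : Set G).Finite := by
    refine hH.subset ?_
    rintro x ⟨k, rfl⟩
    exact pow_mem hmem k
  have hfin : IsOfFinOrder (g ^ n) := finite_powers.mp hpow
  rcases isOfFinOrder_pow.mp hfin with h' | h'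
  · exact h'
  · omega

/-- In a profinite group with restricted centralizers of `n`-th powers, if `g` has infinite
order (the subgroup topologically generated by `g` is infinite), then `D = C_G(g ^ n)` is
open and `y ^ n ∈ FC(D)` for every `y ∈ D`. -/
theorem stmt_11 {G : Type*} [Group G] [TopologicalSpace G] [IsTopologicalGroup G]
    [CompactSpace G] [T2Space G] [TotallyDisconnectedSpace G]
    (n : ℕ) (hn : 0 < n)
    (h : ∀ x : G, (Subgroup.centralizer {x ^ n} : Set G).Finite ∨
      IsOpen (Subgroup.centralizer {x ^ n} : Set G))
    (g : G) (hg : ((Subgroup.zpowers g).topologicalClosure : Set G).Infinite) :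
    IsOpen ((Subgroup.centralizer {g ^ n}) : Set G) ∧
      ∀ y : ↥(Subgroup.centralizer {g ^ n}),
        (Subgroup.centralizer {y ^ n} : Subgroup ↥(Subgroup.centralizer {g ^ n})).FiniteIndex := by
  have hnot : ¬ IsOfFinOrder g := aux_not_finOrder hg
  have hself : g ^ n ∈ Subgroup.centralizer {g ^ n} := by
    rw [Subgroup.mem_centralizer_iff]
    rintro a rfl
    rfl
  have hDopen : IsOpen ((Subgroup.centralizer {g ^ n}) : Set G) := by
    rcases h g with hf | ho
    · exact absurd (aux_finOrder_of_mem_finite hn hf hself) hnot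
    · exact ho
  refine ⟨hDopen, ?_⟩
  intro y
  set C := Subgroup.centralizer {(y : G) ^ n} with hCdef
  have hyc : Commute ((y : G)) (g ^ n) :=
    (Subgroup.mem_centralizer_iff.mp y.2 (g ^ n) rfl).symm
  have hgC : g ^ n ∈ C := by
    rw [hCdef, Subgroup.mem_centralizer_iff]
    rintro a rfl
    exact (hyc.pow_left n).eq
  have hCopen : IsOpen (C : Set G) := by
    rcases h (y : G) with hf | ho
    · exact absurd (aux_finOrder_of_mem_finite hn hf hgC) hnot
    · exact ho
  have : Finite (G ⧸ C) := C.quotient_finite_of_isOpen hCopen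
  have : C.FiniteIndex := Subgroup.finiteIndex_of_finite_quotient (H := C)
  have heq : (Subgroup.centralizer {y ^ n} : Subgroup ↥(Subgroup.centralizer {g ^ n})) = C.subgroupOf (Subgroup.centralizer {g ^ n}) := by
    ext z
    simp only [Subgroup.mem_centralizer_iff, Subgroup.mem_subgroupOf, hCdef,
      Set.mem_singleton_iff]
    constructor
    · intro hz a ha
      subst ha
      have := hz (y ^ n) rfl
      exact_mod_cast congrArg (Subtype.val) this
    · intro hz a ha
      subst ha
      ext
      exact_mod_cast hz _ rfl
  rw [heq]
  infer_instance
end
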